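/- The family consisting of the identity 1, the elements v^p for p ≥ 1, the elements u^p for p ≥ 1, and the elements e_{i,j} := v^i (1 − v u) u^j for all i, j ∈ ℕ, is a ℂ-vector space basis of the algebraic Toeplitz algebra T_alg. -/

import Mathlib

/-- The defining relation of the algebraic Toeplitz algebra: `U * V = 1`,
where `U = ι false` and `V = ι true` are the two generators of the free algebra. -/
inductive ToeplitzRel : FreeAlgebra ℂ Bool → FreeAlgebra ℂ Bool → Prop
  | rel : ToeplitzRel (FreeAlgebra.ι ℂ false * FreeAlgebra.ι ℂ true) 1

/-- The algebraic Toeplitz algebra: the quotient of the free `ℂ`-algebra on two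
generators `U, V` by the two-sided ideal generated by `U * V - 1`. -/
abbrev Talg : Type := RingQuot ToeplitzRel

/-- The image `u` of the generator `U` in the algebraic Toeplitz algebra. -/
noncomputable def Tu : Talg := RingQuot.mkAlgHom ℂ ToeplitzRel (FreeAlgebra.ι ℂ false)

/-- The image `v` of the generator `V` in the algebraic Toeplitz algebra. -/
noncomputable def Tv : Talg := RingQuot.mkAlgHom ℂ ToeplitzRel (FreeAlgebra.ι ℂ true)

/-- The matrix units `e_{i,j} = v^i (1 - v u) u^j` of the algebraic Toeplitz algebra. -/
noncomputable def Te (i j : ℕ) : Talg := Tv ^ i * (1 - Tv * Tu) * Tu ^ j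

/-- The family consisting of `1`, the `v^p` for `p ≥ 1`, the `u^p` for `p ≥ 1`,
and the matrix units `e_{i,j}` for `i, j ∈ ℕ`. -/
noncomputable def basisFam : Unit ⊕ ℕ+ ⊕ ℕ+ ⊕ ℕ × ℕ → Talg
  | Sum.inl _ => 1
  | Sum.inr (Sum.inl p) => Tv ^ (p : ℕ)
  | Sum.inr (Sum.inr (Sum.inl p)) => Tu ^ (p : ℕ)
  | Sum.inr (Sum.inr (Sum.inr ij)) => Te ij.1 ij.2

/-!
Spanning: the span of the family contains `1` and is stable under left multiplication by `u`
and `v` (from `u v = 1` one computes each product explicitly), and `u, v` generate the algebra.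

Independence: the character `u ↦ T⁻¹, v ↦ T` to Laurent polynomials kills every `e_{i,j}` and
sends `1, v^p, u^p` to the distinct monomials `T^0, T^p, T^{-p}`; so it suffices that the
`e_{i,j}` are independent. They form a system of matrix units, `e_{i,j} e_{k,l} = δ_{j,k} e_{i,l}`,
and `e_{0,0} = 1 - v u ≠ 0` because `v u ≠ 1` for the shifts on `ℕ →₀ ℂ`.
-/

open Function LaurentPolynomial

theorem Submodule.span_range_eq_top_of_mul_mem {R A ι : Type*} [CommSemiring R] [Semiring A]
    [Algebra R A] {s : Set A} (hs : Algebra.adjoin R s = ⊤) {b : ι → A}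
    (h1 : 1 ∈ span R (Set.range b)) (hmul : ∀ a ∈ s, ∀ i, a * b i ∈ span R (Set.range b)) :
    span R (Set.range b) = ⊤ := by
  set S := span R (Set.range b)
  have hmulS : ∀ a ∈ s, ∀ y ∈ S, a * y ∈ S := fun a ha =>
    span_le.mpr
      (Set.range_subset_iff.mpr (hmul a ha) : Set.range b ⊆ S.comap (LinearMap.mulLeft R a))
  refine eq_top_iff'.mpr fun x => ?_
  have hx : ∀ y ∈ S, x * y ∈ S := by
    induction (hs ▸ Algebra.mem_top : x ∈ Algebra.adjoin R s) using Algebra.adjoin_induction with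
    | mem a ha => exact hmulS a ha
    | algebraMap r => exact fun y hy => (Algebra.smul_def r y).symm ▸ S.smul_mem r hy
    | add a b _ _ ha hb => exact fun y hy => (add_mul a b y).symm ▸ S.add_mem (ha y hy) (hb y hy)
    | mul a b _ _ ha hb => exact fun y hy => (mul_assoc a b y).symm ▸ ha _ (hb y hy)
  simpa using hx 1 h1

theorem LinearIndependent.sum_elim_of_map_eq_zero {R M N ι κ : Type*} [Ring R] [AddCommGroup M]
    [AddCommGroup N] [Module R M] [Module R N] (φ : M →ₗ[R] N) {f : ι → M} {g : κ → M}
    (hf : LinearIndependent R (φ ∘ f)) (hg : LinearIndependent R g) (hφg : ∀ k, φ (g k) = 0) :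
    LinearIndependent R (Sum.elim f g) :=
  hf.of_comp.sum_type hg <| (Submodule.range_ker_disjoint hf).mono_right <|
    Submodule.span_le.mpr <| Set.range_subset_iff.mpr hφg

theorem linearIndependent_uncurry_of_mul_eq_ite {K A ι : Type*} [Field K] [Ring A] [Algebra K A]
    [DecidableEq ι] (e : ι → ι → A) (he : ∀ i j k l, e i j * e k l = if j = k then e i l else 0)
    (i₀ : ι) (h₀ : e i₀ i₀ ≠ 0) : LinearIndependent K (uncurry e) := by
  refine linearIndependent_iff'.mpr fun s c hsum ⟨i, j⟩ hij => ?_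
  have hsandwich : ∀ p : ι × ι, e i₀ i * uncurry e p * e j i₀ =
      if (i, j) = p then e i₀ i₀ else 0 := by
    rintro ⟨k, l⟩
    by_cases hk : i = k <;> by_cases hl : j = l <;> simp [he, hk, hl, @eq_comm _ l]
  have : c (i, j) • e i₀ i₀ = 0 := by
    have := congr_arg (fun x => e i₀ i * x * e j i₀) hsum
    simpa [Finset.mul_sum, Finset.sum_mul, hsandwich, hij] using this
  exact (smul_eq_zero.mp this).resolve_right h₀

section OneSidedInverse

variable {R : Type*} [Ring R] {u v : R}

theorem mul_pow_succ_of_mul_eq_one (h : u * v = 1) (n : ℕ) : u * v ^ (n + 1) = v ^ n := by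
  rw [pow_succ', ← mul_assoc, h, one_mul]

theorem pow_mul_pow_of_mul_eq_one (h : u * v = 1) (j k : ℕ) :
    u ^ j * v ^ k = if j ≤ k then v ^ (k - j) else u ^ (j - k) := by
  induction j generalizing k with
  | zero => simp
  | succ j ih =>
    cases k with
    | zero => simp
    | succ k =>
      rw [pow_succ, mul_assoc, mul_pow_succ_of_mul_eq_one h, ih]
      simp

theorem mul_one_sub_mul_of_mul_eq_one (h : u * v = 1) : u * (1 - v * u) = 0 := by
  rw [mul_sub, mul_one, ← mul_assoc, h, one_mul, sub_self]

theorem one_sub_mul_mul_of_mul_eq_one (h : u * v = 1) : (1 - v * u) * v = 0 := by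
  rw [sub_mul, one_mul, mul_assoc, h, mul_one, sub_self]

theorem isIdempotentElem_one_sub_mul_of_mul_eq_one (h : u * v = 1) :
    IsIdempotentElem (1 - v * u) := by
  rw [IsIdempotentElem, mul_sub, mul_one, ← mul_assoc, one_sub_mul_mul_of_mul_eq_one h, zero_mul,
    sub_zero]

theorem one_sub_mul_mul_pow_mul_pow_mul_one_sub_mul (h : u * v = 1) (j k : ℕ) :
    (1 - v * u) * (u ^ j * v ^ k) * (1 - v * u) = if j = k then 1 - v * u else 0 := by
  rw [pow_mul_pow_of_mul_eq_one h]
  rcases lt_trichotomy j k with hjk | rfl | hjk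
  · obtain ⟨n, hn⟩ : ∃ n, k - j = n + 1 := ⟨k - j - 1, by omega⟩
    rw [if_pos hjk.le, if_neg hjk.ne, hn, pow_succ', ← mul_assoc,
      one_sub_mul_mul_of_mul_eq_one h, zero_mul, zero_mul]
  · simp [(isIdempotentElem_one_sub_mul_of_mul_eq_one h).eq]
  · obtain ⟨n, hn⟩ : ∃ n, j - k = n + 1 := ⟨j - k - 1, by omega⟩
    rw [if_neg (not_le.mpr hjk), if_neg hjk.ne', hn, pow_succ, mul_assoc, mul_assoc,
      mul_one_sub_mul_of_mul_eq_one h, mul_zero, mul_zero]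

theorem matrixUnit_mul_matrixUnit_of_mul_eq_one (h : u * v = 1) (i j k l : ℕ) :
    v ^ i * (1 - v * u) * u ^ j * (v ^ k * (1 - v * u) * u ^ l) =
      if j = k then v ^ i * (1 - v * u) * u ^ l else 0 := by
  have := one_sub_mul_mul_pow_mul_pow_mul_one_sub_mul h j k
  calc _ = v ^ i * ((1 - v * u) * (u ^ j * v ^ k) * (1 - v * u)) * u ^ l := by noncomm_ring
    _ = _ := by rw [this]; split_ifs <;> simp

end OneSidedInverse

namespace Talg

def lift {A : Type*} [Semiring A] [Algebra ℂ A] (a b : A) (h : a * b = 1) : Talg →ₐ[ℂ] A :=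
  RingQuot.liftAlgHom ℂ ⟨FreeAlgebra.lift ℂ fun x => if x then b else a, by rintro _ _ ⟨⟩; simp [h]⟩

variable {A : Type*} [Semiring A] [Algebra ℂ A] {a b : A} (h : a * b = 1)

@[simp] theorem lift_Tu : lift a b h Tu = a := by simp [lift, Tu]

@[simp] theorem lift_Tv : lift a b h Tv = b := by simp [lift, Tv]

end Talg

theorem Tu_mul_Tv : Tu * Tv = 1 := by
  simpa [Tu, Tv] using RingQuot.mkAlgHom_rel ℂ ToeplitzRel.rel

theorem Talg.adjoin_Tu_Tv : Algebra.adjoin ℂ {Tu, Tv} = ⊤ := by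
  have : ({Tu, Tv} : Set Talg) =
      RingQuot.mkAlgHom ℂ ToeplitzRel '' Set.range (FreeAlgebra.ι ℂ) := by
    ext x
    simp [Tu, Tv, eq_comm]
  rw [this, ← AlgHom.map_adjoin, FreeAlgebra.adjoin_range_ι, Algebra.map_top,
    AlgHom.range_eq_top]
  exact RingQuot.mkAlgHom_surjective ℂ ToeplitzRel

theorem Tv_mul_Tu_ne_one : Tv * Tu ≠ 1 := by
  let U : Module.End ℂ (ℕ →₀ ℂ) := Finsupp.lcomapDomain Nat.succ Nat.succ_injective
  let V : Module.End ℂ (ℕ →₀ ℂ) := Finsupp.lmapDomain ℂ ℂ Nat.succ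
  have hUV : U * V = 1 :=
    LinearMap.ext fun l => Finsupp.comapDomain_mapDomain _ Nat.succ_injective l
  have hVU : V * U ≠ 1 := fun h => by
    simpa [U, V] using congr_arg (fun f : Module.End ℂ (ℕ →₀ ℂ) => f (Finsupp.single 0 1)) h.symm
  intro h
  exact hVU (by simpa using congr_arg (Talg.lift U V hUV) h)

theorem Te_zero_zero_ne_zero : Te 0 0 ≠ 0 := by
  simpa [Te, sub_eq_zero] using Tv_mul_Tu_ne_one.symm

theorem linearIndependent_Te : LinearIndependent ℂ (uncurry Te) :=
  linearIndependent_uncurry_of_mul_eq_ite Te (matrixUnit_mul_matrixUnit_of_mul_eq_one Tu_mul_Tv)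
    0 Te_zero_zero_ne_zero

noncomputable def Talg.toLaurent : Talg →ₐ[ℂ] ℂ[T;T⁻¹] :=
  Talg.lift (T (-1)) (T 1) (by rw [← T_add, neg_add_cancel, T_zero])

theorem Talg.toLaurent_Te (i j : ℕ) : Talg.toLaurent (Te i j) = 0 := by
  have : (T 1 * T (-1) : ℂ[T;T⁻¹]) = 1 := by rw [← T_add, add_neg_cancel, T_zero]
  simp [Talg.toLaurent, Te, this]

def laurentDegree : Unit ⊕ ℕ+ ⊕ ℕ+ → ℤ :=
  Sum.elim (fun _ => 0) (Sum.elim (fun p => p) (fun p => -p))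

theorem laurentDegree_injective : Injective laurentDegree := by
  rintro (_ | p | p) (_ | q | q) h <;> simp_all [laurentDegree, eq_comm (a := (0 : ℤ))]

theorem linearIndependent_basisFam : LinearIndependent ℂ basisFam := by
  let e : (Unit ⊕ ℕ+ ⊕ ℕ+) ⊕ ℕ × ℕ ≃ Unit ⊕ ℕ+ ⊕ ℕ+ ⊕ ℕ × ℕ :=
    (Equiv.sumAssoc _ _ _).trans (Equiv.sumCongr (Equiv.refl _) (Equiv.sumAssoc _ _ _))
  rw [← linearIndependent_equiv e, ← Sum.elim_comp_inl_inr (basisFam ∘ e)]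
  refine .sum_elim_of_map_eq_zero Talg.toLaurent.toLinearMap ?_ linearIndependent_Te
    fun ij => Talg.toLaurent_Te ij.1 ij.2
  have hχ : Talg.toLaurent.toLinearMap ∘ (basisFam ∘ e) ∘ Sum.inl =
      fun k => T (laurentDegree k) := by
    funext k
    rcases k with _ | p | p <;> simp [e, basisFam, laurentDegree, Talg.toLaurent, T_pow]
  rw [hχ]
  exact (AddMonoidAlgebra.basis ℤ ℂ).linearIndependent.comp _ laurentDegree_injective

section Span

local notation "S" => Submodule.span ℂ (Set.range basisFam)

theorem one_mem_span_basisFam : 1 ∈ S :=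
  Submodule.subset_span ⟨.inl (), rfl⟩

theorem Tv_pow_mem_span_basisFam : ∀ n : ℕ, Tv ^ n ∈ S
  | 0 => by simpa using one_mem_span_basisFam
  | n + 1 => Submodule.subset_span ⟨.inr (.inl n.succPNat), rfl⟩

theorem Tu_pow_mem_span_basisFam : ∀ n : ℕ, Tu ^ n ∈ S
  | 0 => by simpa using one_mem_span_basisFam
  | n + 1 => Submodule.subset_span ⟨.inr (.inr (.inl n.succPNat)), rfl⟩

theorem Te_mem_span_basisFam (i j : ℕ) : Te i j ∈ S :=
  Submodule.subset_span ⟨.inr (.inr (.inr (i, j))), rfl⟩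

theorem Tu_mul_basisFam_mem_span (k : Unit ⊕ ℕ+ ⊕ ℕ+ ⊕ ℕ × ℕ) : Tu * basisFam k ∈ S := by
  rcases k with _ | p | p | ⟨_ | i, j⟩
  · simpa [basisFam] using Tu_pow_mem_span_basisFam 1
  · obtain ⟨n, rfl⟩ : ∃ n : ℕ, p = n.succPNat := ⟨p.natPred, p.succPNat_natPred.symm⟩
    simpa [basisFam, mul_pow_succ_of_mul_eq_one Tu_mul_Tv] using Tv_pow_mem_span_basisFam n
  · simpa [basisFam, ← pow_succ'] using Tu_pow_mem_span_basisFam (p + 1)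
  · simp [basisFam, Te, ← mul_assoc, mul_one_sub_mul_of_mul_eq_one Tu_mul_Tv]
  · simpa [basisFam, Te, ← mul_assoc, mul_pow_succ_of_mul_eq_one Tu_mul_Tv]
      using Te_mem_span_basisFam i j

theorem Tv_mul_basisFam_mem_span (k : Unit ⊕ ℕ+ ⊕ ℕ+ ⊕ ℕ × ℕ) : Tv * basisFam k ∈ S := by
  rcases k with _ | p | p | ⟨i, j⟩
  · simpa [basisFam] using Tv_pow_mem_span_basisFam 1
  · simpa [basisFam, ← pow_succ'] using Tv_pow_mem_span_basisFam (p + 1)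
  · obtain ⟨n, rfl⟩ : ∃ n : ℕ, p = n.succPNat := ⟨p.natPred, p.succPNat_natPred.symm⟩
    have : Tv * Tu ^ (n + 1) = Tu ^ n - Te 0 n := by
      rw [Te, pow_zero, one_mul, sub_mul, one_mul, sub_sub_cancel, pow_succ', mul_assoc]
    simpa [basisFam, this] using
      Submodule.sub_mem _ (Tu_pow_mem_span_basisFam n) (Te_mem_span_basisFam 0 n)
  · simpa [basisFam, Te, ← mul_assoc, ← pow_succ'] using Te_mem_span_basisFam (i + 1) j

end Span

theorem span_basisFam : Submodule.span ℂ (Set.range basisFam) = ⊤ :=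
  Submodule.span_range_eq_top_of_mul_mem Talg.adjoin_Tu_Tv one_mem_span_basisFam <| by
    rintro a (rfl | rfl)
    exacts [Tu_mul_basisFam_mem_span, Tv_mul_basisFam_mem_span]

/-- The family `1`, `v^p (p ≥ 1)`, `u^p (p ≥ 1)`, `e_{i,j} (i,j ∈ ℕ)` is a
`ℂ`-vector space basis of the algebraic Toeplitz algebra. -/
theorem stmt5 :
    LinearIndependent ℂ basisFam ∧ Submodule.span ℂ (Set.range basisFam) = ⊤ :=
  ⟨linearIndependent_basisFam, span_basisFam⟩
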